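/- Let A and B be complex Banach algebras, s a fixed nonzero complex number with |s| < 1, r > 2 a real number, and θ ≥ 0. Suppose f : A³ → B satisfies f(x, 0, a) = f(0, z, a) = f(x, z, 0) = 0 for all x, z, a ∈ A and, for all λ, μ, η ∈ T¹ and all x, y, z, w, a, b ∈ A, ‖2f(λ(x+y)/2, μ(z−w), η(a+b)) + 2f(λ(x−y)/2, μ(z+w), η(a−b)) − λμη(2f(x,z,a) − 2f(x,w,b) + 2f(y,z,b) − 2f(y,w,a))‖ ≤ ‖s · D₁f(x, y, z, w, a, b)‖ + θ(‖x‖^r + ‖y‖^r)(‖z‖^r + ‖w‖^r)(‖a‖^r + ‖b‖^r). Then there exists a unique ℂ-trilinear mapping H : A³ → B such that ‖f(x, z, a) − H(x, z, a)‖ ≤ (2^r θ/(2(2^r − 2))) ‖x‖^r ‖z‖^r ‖a‖^r for all x, z, a ∈ A. If, in addition, f satisfies ‖f(x_{σ(1)}, x_{σ(2)}, x_{σ(3)}) − f(x₁, x₂, x₃)‖ ≤ θ ‖x₁‖^r ‖x₂‖^r ‖x₃‖^r for all x₁, x₂, x₃ ∈ A and every permutation (σ(1), σ(2), σ(3)) of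 (1,2,3), and ‖f(xy, zw, ab) − f(x, z, a)f(y, w, b)‖ ≤ θ(‖x‖^r + ‖y‖^r)(‖z‖^r + ‖w‖^r)(‖a‖^r + ‖b‖^r) for all x, y, z, w, a, b ∈ A, then H is a permuting trihomomorphism. -/

import Mathlib

/-!
Taking `λ = μ = η = 1` and `y = w = b = 0` in the hypothesis gives
`‖2 f(x/2, z, a) - f(x, z, a)‖ ≤ θ/2 ‖x‖ʳ‖z‖ʳ‖a‖ʳ`, so Hyers' sequence `2ⁿ f(x/2ⁿ, z, a)` is
Cauchy (with ratio `2/2ʳ`) and converges to some `H` within the stated distance of `f`.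
Rescaling the hypothesis multiplies its `θ`-term by `(2/2ʳ)ⁿ`, so in the limit
`‖D₂ H‖ ≤ |s| ‖D₁ H‖` with all rotations. As `H(x/2, z, a) = H(x, z, a)/2`, the unrotated `D₂ H`
equals `D₁ H`, which therefore vanishes, and then so do all rotated `D₂ H`. The first gives
additivity in each variable (Jensen's equation), the second `𝕋`-homogeneity, and together
they give `ℂ`-linearity, since every complex number of modulus at most 2 is a sum of two unit
ones.

Any trilinear `H` within `C ‖x‖ʳ‖z‖ʳ‖a‖ʳ` of `f` is the limit of `8ⁿ f(x/2ⁿ, z/2ⁿ, a/2ⁿ)`;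
this gives uniqueness, and it transfers the approximate multiplicativity and symmetry of `f`
to exact ones for `H`, the defects being damped by `(64/2³ʳ)ⁿ` and `(8/2³ʳ)ⁿ` (here `r > 2`).
-/

/-- A mapping `f : X³ → Y` is *tri-additive* if it is additive in each variable. -/
def TriAdditive {X Y : Type*} [AddCommGroup X] [AddCommGroup Y]
    (f : X → X → X → Y) : Prop :=
  (∀ x x' z a : X, f (x + x') z a = f x z a + f x' z a) ∧
  (∀ x z z' a : X, f x (z + z') a = f x z a + f x z' a) ∧
  (∀ x z a a' : X, f x z (a + a') = f x z a + f x z a')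

/-- A mapping `f : X³ → Y` is *ℂ-trilinear* if it is ℂ-linear in each variable. -/
def CTrilinear {X Y : Type*} [AddCommGroup X] [Module ℂ X] [AddCommGroup Y] [Module ℂ Y]
    (f : X → X → X → Y) : Prop :=
  TriAdditive f ∧
  (∀ (c : ℂ) (x z a : X), f (c • x) z a = c • f x z a) ∧
  (∀ (c : ℂ) (x z a : X), f x (c • z) a = c • f x z a) ∧
  (∀ (c : ℂ) (x z a : X), f x z (c • a) = c • f x z a)

/-- `D₁f(x, y, z, w, a, b)`. -/
def D₁ {X Y : Type*} [AddCommGroup X] [Module ℂ X] [AddCommGroup Y] [Module ℂ Y]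
    (f : X → X → X → Y) (x y z w a b : X) : Y :=
  f (x + y) (z - w) (a + b) + f (x - y) (z + w) (a - b)
    - (2 : ℂ) • f x z a + (2 : ℂ) • f x w b - (2 : ℂ) • f y z b + (2 : ℂ) • f y w a

/-- `D₂f(x, y, z, w, a, b)`. -/
noncomputable def D₂ {X Y : Type*} [AddCommGroup X] [Module ℂ X] [AddCommGroup Y] [Module ℂ Y]
    (f : X → X → X → Y) (x y z w a b : X) : Y :=
  (2 : ℂ) • f ((2 : ℂ)⁻¹ • (x + y)) (z - w) (a + b)
    + (2 : ℂ) • f ((2 : ℂ)⁻¹ • (x - y)) (z + w) (a - b)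
    - (2 : ℂ) • f x z a + (2 : ℂ) • f x w b - (2 : ℂ) • f y z b + (2 : ℂ) • f y w a


/-- A ℂ-trilinear `H : A³ → B` is a *permuting trihomomorphism* if it is multiplicative
and is invariant under every permutation of its three variables. -/
def PermutingTrihomomorphism {A B : Type*} [Ring A] [Module ℂ A] [Ring B] [Module ℂ B]
    (H : A → A → A → B) : Prop :=
  CTrilinear H ∧
  (∀ x y z w a b : A, H (x * y) (z * w) (a * b) = H x z a * H y w b) ∧
  (∀ (σ : Equiv.Perm (Fin 3)) (x : Fin 3 → A),
    H (x (σ 0)) (x (σ 1)) (x (σ 2)) = H (x 0) (x 1) (x 2))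


open Filter Topology

section AxisVanishing

variable {X Y : Type*} [Zero X] [Zero Y]

def AxisVanishing (f : X → X → X → Y) : Prop :=
  ∀ x z a : X, f x 0 a = 0 ∧ f 0 z a = 0 ∧ f x z 0 = 0

variable {f : X → X → X → Y} (hf : AxisVanishing f)
include hf

lemma AxisVanishing.apply_zero₁ (z a : X) : f 0 z a = 0 := (hf 0 z a).2.1
lemma AxisVanishing.apply_zero₂ (x a : X) : f x 0 a = 0 := (hf x 0 a).1
lemma AxisVanishing.apply_zero₃ (x z : X) : f x z 0 = 0 := (hf x z 0).2.2

end AxisVanishing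

section Algebraic

variable {X Y : Type*} [AddCommGroup X] [Module ℂ X] [AddCommGroup Y] [Module ℂ Y]

/-- The left-hand side of the hypothesis: `D₂ f` with the arguments rotated by `l, m, e`. -/
noncomputable def D₂rot (f : X → X → X → Y) (l m e : ℂ) (x y z w a b : X) : Y :=
  (2 : ℂ) • f ((2 : ℂ)⁻¹ • (l • (x + y))) (m • (z - w)) (e • (a + b))
    + (2 : ℂ) • f ((2 : ℂ)⁻¹ • (l • (x - y))) (m • (z + w)) (e • (a - b))
    - (l * m * e) • ((2 : ℂ) • f x z a - (2 : ℂ) • f x w b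
        + (2 : ℂ) • f y z b - (2 : ℂ) • f y w a)

namespace AxisVanishing

variable {f : X → X → X → Y} (hf : AxisVanishing f)
include hf

lemma D₁_eq_zero (x z a : X) : D₁ f x 0 z 0 a 0 = 0 := by
  simp only [D₁, add_zero, sub_zero, hf.apply_zero₂, hf.apply_zero₁, smul_zero]
  module

lemma D₂rot_eq (l m e : ℂ) (x z a : X) :
    D₂rot f l m e x 0 z 0 a 0 = (2 : ℂ) •
      ((2 : ℂ) • f ((2 : ℂ)⁻¹ • (l • x)) (m • z) (e • a) - (l * m * e) • f x z a) := by
  simp only [D₂rot, add_zero, sub_zero, hf.apply_zero₂, hf.apply_zero₁, smul_zero]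
  module

end AxisVanishing

lemma map_add_of_jensen (g : X → Y) (h0 : g 0 = 0)
    (hJ : ∀ p q, g (p + q) + g (p - q) = (2 : ℂ) • g p) (u v : X) :
    g (u + v) = g u + g v := by
  set p := (2 : ℂ)⁻¹ • (u + v)
  set q := (2 : ℂ)⁻¹ • (u - v)
  have hdouble : g (p + p) = (2 : ℂ) • g p := by simpa [h0] using hJ p p
  calc g (u + v) = g (p + p) := by congr 1; module
    _ = g (p + q) + g (p - q) := by rw [hdouble, hJ]
    _ = g u + g v := by congr 2 <;> module

lemma TriAdditive.of_D₁_eq_zero {f : X → X → X → Y} (hf : AxisVanishing f)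
    (hD : ∀ x y z w a b, D₁ f x y z w a b = 0) : TriAdditive f := by
  refine ⟨fun u v z a => ?_, fun x u v a => ?_, fun x z u v => ?_⟩
  · refine map_add_of_jensen (f · z a) (hf.apply_zero₁ z a) (fun p q => ?_) u v
    have h := hD p q z 0 a 0
    simp only [D₁, add_zero, sub_zero, hf.apply_zero₂, hf.apply_zero₃, smul_zero] at h
    exact sub_eq_zero.1 h
  · refine map_add_of_jensen (f x · a) (hf.apply_zero₂ x a) (fun p q => ?_) u v
    have h := hD x 0 p q a 0
    simp only [D₁, add_zero, sub_zero, hf.apply_zero₁, hf.apply_zero₃, smul_zero] at h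
    rw [← sub_eq_zero, ← h]
    abel
  · refine map_add_of_jensen (f x z ·) (hf.apply_zero₃ x z) (fun p q => ?_) u v
    have h := hD x 0 z 0 p q
    simp only [D₁, add_zero, sub_zero, hf.apply_zero₁, hf.apply_zero₂, smul_zero] at h
    exact sub_eq_zero.1 h

lemma Complex.exists_norm_eq_one_add_eq (w : ℂ) (hw : ‖w‖ ≤ 2) :
    ∃ l₁ l₂ : ℂ, ‖l₁‖ = 1 ∧ ‖l₂‖ = 1 ∧ l₁ + l₂ = w := by
  rcases eq_or_ne w 0 with rfl | hw0
  · exact ⟨1, -1, by simp, by simp, by ring⟩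
  -- `w = ‖w‖ u` with `‖u‖ = 1`, and `‖w‖ = 2t = v + conj v` for `v = t + i √(1 - t²)`
  set t := ‖w‖ / 2
  have ht : t ^ 2 ≤ 1 := by
    have : t ≤ 1 := by simp only [t]; linarith
    have : 0 ≤ t := by positivity
    nlinarith
  set u := w / (‖w‖ : ℂ)
  set v : ℂ := ⟨t, √(1 - t ^ 2)⟩
  have hw0' : (‖w‖ : ℂ) ≠ 0 := by exact_mod_cast norm_ne_zero_iff.2 hw0
  have hu : ‖u‖ = 1 := by simp [u, hw0]
  have hv : ‖v‖ = 1 := by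
    rw [Complex.norm_def, Complex.normSq_mk, Real.mul_self_sqrt (by linarith),
      show t * t + (1 - t ^ 2) = 1 by ring, Real.sqrt_one]
  refine ⟨u * v, u * (starRingEnd ℂ v), by simp [hu, hv], by simp [hu, hv], ?_⟩
  rw [← mul_add, Complex.add_conj]
  simp only [u, v, t]
  push_cast
  field_simp

lemma map_smul_of_map_add_of_map_unit_smul (g : X → Y) (hadd : ∀ u v, g (u + v) = g u + g v)
    (hunit : ∀ l : ℂ, ‖l‖ = 1 → ∀ x, g (l • x) = l • g x) (c : ℂ) (x : X) :
    g (c • x) = c • g x := by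
  let G : X →+ Y := AddMonoidHom.mk' g hadd
  obtain ⟨n, hn⟩ : ∃ n : ℕ, ‖c‖ ≤ 2 * (n + 1) := ⟨⌈‖c‖⌉₊, by linarith [Nat.le_ceil ‖c‖]⟩
  have hn0 : ((n + 1 : ℕ) : ℂ) ≠ 0 := Nat.cast_ne_zero.2 n.succ_ne_zero
  obtain ⟨l₁, l₂, hl₁, hl₂, hl⟩ := Complex.exists_norm_eq_one_add_eq (c / (n + 1 : ℕ)) (by
    rw [norm_div, Complex.norm_natCast, div_le_iff₀ (by positivity)]
    push_cast
    linarith)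
  have hc : c • x = (n + 1) • (l₁ • x + l₂ • x) := by
    rw [← add_smul, hl, ← Nat.cast_smul_eq_nsmul ℂ, smul_smul, mul_div_cancel₀ _ hn0]
  calc g (c • x) = (n + 1) • (g (l₁ • x) + g (l₂ • x)) := by
        rw [hc, ← hadd]; exact map_nsmul G _ _
    _ = c • g x := by
        rw [hunit l₁ hl₁, hunit l₂ hl₂, ← add_smul, hl, ← Nat.cast_smul_eq_nsmul ℂ, smul_smul,
          mul_div_cancel₀ _ hn0]

lemma CTrilinear.of_map_unit_smul {f : X → X → X → Y} (hadd : TriAdditive f)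
    (hunit : ∀ l m e : ℂ, ‖l‖ = 1 → ‖m‖ = 1 → ‖e‖ = 1 → ∀ x z a,
      f (l • x) (m • z) (e • a) = (l * m * e) • f x z a) : CTrilinear f := by
  refine ⟨hadd, fun c x z a => ?_, fun c x z a => ?_, fun c x z a => ?_⟩
  · exact map_smul_of_map_add_of_map_unit_smul (f · z a) (hadd.1 · · z a)
      (fun l hl p => by simpa using hunit l 1 1 hl (by simp) (by simp) p z a) c x
  · exact map_smul_of_map_add_of_map_unit_smul (f x · a) (hadd.2.1 x · · a)
      (fun l hl p => by simpa using hunit 1 l 1 (by simp) hl (by simp) x p a) c z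
  · exact map_smul_of_map_add_of_map_unit_smul (f x z ·) (hadd.2.2 x z)
      (fun l hl p => by simpa using hunit 1 1 l (by simp) (by simp) hl x z p) c a

end Algebraic

lemma two_pow_div_two_rpow_pow_lt_one {r : ℝ} {j k : ℕ} (h : (j : ℝ) < r * k) :
    (2 : ℝ) ^ j / ((2 : ℝ) ^ r) ^ k < 1 := by
  rw [div_lt_one (by positivity), ← Real.rpow_natCast, ← Real.rpow_natCast,
    ← Real.rpow_mul zero_le_two]
  exact Real.rpow_lt_rpow_of_exponent_lt one_lt_two h

lemma eq_of_tendsto_of_norm_sub_le_geometric {Y : Type*} [NormedAddCommGroup Y] {u v : ℕ → Y}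
    {p q : Y} {K ρ : ℝ} (hu : Tendsto u atTop (𝓝 p)) (hv : Tendsto v atTop (𝓝 q))
    (hρ₀ : 0 ≤ ρ) (hρ : ρ < 1) (h : ∀ n, ‖u n - v n‖ ≤ K * ρ ^ n) : p = q := by
  have hzero : Tendsto (fun n => u n - v n) atTop (𝓝 0) := squeeze_zero_norm h
    (by simpa using (tendsto_pow_atTop_nhds_zero_of_lt_one hρ₀ hρ).const_mul K)
  exact sub_eq_zero.1 (tendsto_nhds_unique (hu.sub hv) hzero)

lemma tendsto_apply₃ {ι α β γ δ : Type*} [TopologicalSpace δ] {l : Filter ι}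
    {φ : ι → α → β → γ → δ} {H : α → β → γ → δ} (h : Tendsto φ l (𝓝 H))
    (x : α) (z : β) (a : γ) : Tendsto (fun n => φ n x z a) l (𝓝 (H x z a)) :=
  tendsto_pi_nhds.1 (tendsto_pi_nhds.1 (tendsto_pi_nhds.1 h x) z) a

lemma AxisVanishing.of_tendsto {ι X Y : Type*} [Zero X] [Zero Y] [TopologicalSpace Y]
    [T2Space Y] {l : Filter ι} [l.NeBot] {φ : ι → X → X → X → Y} {H : X → X → X → Y}
    (hφ : Tendsto φ l (𝓝 H)) (h : ∀ n, AxisVanishing (φ n)) : AxisVanishing H := fun x z a =>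
  ⟨tendsto_nhds_unique (tendsto_apply₃ hφ x 0 a)
      (tendsto_const_nhds.congr fun n => ((h n).apply_zero₂ x a).symm),
    tendsto_nhds_unique (tendsto_apply₃ hφ 0 z a)
      (tendsto_const_nhds.congr fun n => ((h n).apply_zero₁ z a).symm),
    tendsto_nhds_unique (tendsto_apply₃ hφ x z 0)
      (tendsto_const_nhds.congr fun n => ((h n).apply_zero₃ x z).symm)⟩

section Normed

variable {X Y : Type*} [NormedAddCommGroup X] [NormedSpace ℂ X]
  [NormedAddCommGroup Y] [NormedSpace ℂ Y]

lemma norm_inv_two_pow_smul_rpow (r : ℝ) (n : ℕ) (x : X) :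
    ‖((2 : ℂ) ^ n)⁻¹ • x‖ ^ r = ‖x‖ ^ r / ((2 : ℝ) ^ r) ^ n := by
  rw [norm_smul, Real.mul_rpow (by positivity) (norm_nonneg x), norm_inv, norm_pow,
    Complex.norm_ofNat, Real.inv_rpow (by positivity), ← Real.rpow_pow_comm zero_le_two,
    mul_comm, div_eq_mul_inv]

theorem exists_tendsto_two_pow_smul_of_norm_sub_le [CompleteSpace Y] (g : X → Y) {r c : ℝ}
    (hr : 1 < r) (hg : ∀ x, ‖(2 : ℂ) • g ((2 : ℂ)⁻¹ • x) - g x‖ ≤ c * ‖x‖ ^ r) (x : X) :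
    ∃ L, Tendsto (fun n : ℕ => (2 : ℂ) ^ n • g (((2 : ℂ) ^ n)⁻¹ • x)) atTop (𝓝 L) ∧
      ‖g x - L‖ ≤ c * (2 : ℝ) ^ r / ((2 : ℝ) ^ r - 2) * ‖x‖ ^ r := by
  set q := (2 : ℝ) ^ r with hq_def
  have hq : 2 < q := by simpa using Real.rpow_lt_rpow_of_exponent_lt one_lt_two hr
  have hρ : 2 / q < 1 := (div_lt_one (by linarith)).2 hq
  set u : ℕ → Y := fun n => (2 : ℂ) ^ n • g (((2 : ℂ) ^ n)⁻¹ • x)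
  have hstep : ∀ n, dist (u n) (u (n + 1)) ≤ c * ‖x‖ ^ r * (2 / q) ^ n := by
    intro n
    have harg : (2 : ℂ)⁻¹ • (((2 : ℂ) ^ n)⁻¹ • x) = ((2 : ℂ) ^ (n + 1))⁻¹ • x := by
      rw [smul_smul, pow_succ, mul_inv, mul_comm]
    have hsub : u (n + 1) - u n = (2 : ℂ) ^ n •
        ((2 : ℂ) • g ((2 : ℂ)⁻¹ • (((2 : ℂ) ^ n)⁻¹ • x)) - g (((2 : ℂ) ^ n)⁻¹ • x)) := by
      simp only [u]
      rw [harg, pow_succ]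
      module
    rw [dist_comm, dist_eq_norm, hsub, norm_smul, norm_pow, Complex.norm_ofNat]
    calc 2 ^ n * ‖_‖ ≤ 2 ^ n * (c * ‖((2 : ℂ) ^ n)⁻¹ • x‖ ^ r) :=
          mul_le_mul_of_nonneg_left (hg _) (by positivity)
      _ = c * ‖x‖ ^ r * (2 / q) ^ n := by
          rw [norm_inv_two_pow_smul_rpow, ← hq_def, div_pow]
          field_simp
  obtain ⟨L, hL⟩ := cauchySeq_tendsto_of_complete (cauchySeq_of_le_geometric _ _ hρ hstep)
  refine ⟨L, hL, ?_⟩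
  have h := dist_le_of_le_geometric_of_tendsto₀ _ _ hρ hstep hL
  rw [dist_eq_norm] at h
  calc ‖g x - L‖ = ‖u 0 - L‖ := by simp [u]
    _ ≤ c * ‖x‖ ^ r / (1 - 2 / q) := h
    _ = c * q / (q - 2) * ‖x‖ ^ r := by field_simp

def FunctionalIneq (s : ℂ) (r θ : ℝ) (f : X → X → X → Y) : Prop :=
  ∀ l m e : ℂ, ‖l‖ = 1 → ‖m‖ = 1 → ‖e‖ = 1 → ∀ x y z w a b : X,
    ‖D₂rot f l m e x y z w a b‖ ≤ ‖s • D₁ f x y z w a b‖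
      + θ * (‖x‖ ^ r + ‖y‖ ^ r) * (‖z‖ ^ r + ‖w‖ ^ r) * (‖a‖ ^ r + ‖b‖ ^ r)

noncomputable def dilateFst (f : X → X → X → Y) (n : ℕ) (x z a : X) : Y :=
  (2 : ℂ) ^ n • f (((2 : ℂ) ^ n)⁻¹ • x) z a

lemma D₁_dilateFst (f : X → X → X → Y) (n : ℕ) (x y z w a b : X) :
    D₁ (dilateFst f n) x y z w a b
      = (2 : ℂ) ^ n • D₁ f (((2 : ℂ) ^ n)⁻¹ • x) (((2 : ℂ) ^ n)⁻¹ • y) z w a b := by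
  simp only [D₁, dilateFst, ← smul_add, ← smul_sub]
  module

lemma D₂rot_dilateFst (f : X → X → X → Y) (n : ℕ) (l m e : ℂ) (x y z w a b : X) :
    D₂rot (dilateFst f n) l m e x y z w a b
      = (2 : ℂ) ^ n • D₂rot f l m e (((2 : ℂ) ^ n)⁻¹ • x) (((2 : ℂ) ^ n)⁻¹ • y) z w a b := by
  have hc : ∀ u v : X, (2 : ℂ)⁻¹ • (l • (((2 : ℂ) ^ n)⁻¹ • u + ((2 : ℂ) ^ n)⁻¹ • v))
      = ((2 : ℂ) ^ n)⁻¹ • ((2 : ℂ)⁻¹ • (l • (u + v))) := fun u v => by module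
  simp only [D₂rot, dilateFst, sub_eq_add_neg, ← smul_neg, hc]
  module

lemma AxisVanishing.dilateFst {f : X → X → X → Y} (hf : AxisVanishing f) (n : ℕ) :
    AxisVanishing (_root_.dilateFst f n) := fun x z a => by
  simp [_root_.dilateFst, hf.apply_zero₁, hf.apply_zero₂, hf.apply_zero₃]

lemma FunctionalIneq.norm_two_smul_inv_two_smul_sub_le {s : ℂ} {r θ : ℝ} {f : X → X → X → Y}
    (hineq : FunctionalIneq s r θ f) (hf : AxisVanishing f) (hr : 0 < r) (x z a : X) :
    ‖(2 : ℂ) • f ((2 : ℂ)⁻¹ • x) z a - f x z a‖ ≤ θ / 2 * (‖x‖ ^ r * ‖z‖ ^ r * ‖a‖ ^ r) := by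
  have h := hineq 1 1 1 (by simp) (by simp) (by simp) x 0 z 0 a 0
  rw [hf.D₂rot_eq, hf.D₁_eq_zero, norm_smul] at h
  simp only [one_smul, one_mul, smul_zero, norm_zero, Complex.norm_ofNat, zero_add,
    Real.zero_rpow hr.ne', add_zero] at h
  linarith

lemma FunctionalIneq.dilateFst {s : ℂ} {r θ : ℝ} {f : X → X → X → Y}
    (hineq : FunctionalIneq s r θ f) (n : ℕ) :
    FunctionalIneq s r (θ * (2 / (2 : ℝ) ^ r) ^ n) (_root_.dilateFst f n) := by
  intro l m e hl hm he x y z w a b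
  have h := hineq l m e hl hm he (((2 : ℂ) ^ n)⁻¹ • x) (((2 : ℂ) ^ n)⁻¹ • y) z w a b
  simp only [norm_inv_two_pow_smul_rpow] at h
  rw [D₁_dilateFst, D₂rot_dilateFst, smul_comm, norm_smul, norm_smul (_ ^ n), norm_pow,
    Complex.norm_ofNat]
  calc 2 ^ n * ‖_‖ ≤ 2 ^ n * _ := mul_le_mul_of_nonneg_left h (by positivity)
    _ = _ := by rw [norm_smul, div_pow]; field_simp

lemma FunctionalIneq.of_tendsto {ι : Type*} {l : Filter ι} [l.NeBot] {s : ℂ} {r θ : ℝ}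
    {θs : ι → ℝ} {φ : ι → X → X → X → Y} {H : X → X → X → Y} (hφ : Tendsto φ l (𝓝 H))
    (hθ : Tendsto θs l (𝓝 θ)) (h : ∀ n, FunctionalIneq s r (θs n) (φ n)) :
    FunctionalIneq s r θ H := by
  intro lm m e hl hm he x y z w a b
  have hD₁ : Continuous fun g : X → X → X → Y => D₁ g x y z w a b := by
    unfold D₁; fun_prop
  have hD₂ : Continuous fun g : X → X → X → Y => D₂rot g lm m e x y z w a b := by
    unfold D₂rot; fun_prop
  refine le_of_tendsto_of_tendsto' ((hD₂.norm.tendsto H).comp hφ) ?_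
    fun n => h n lm m e hl hm he x y z w a b
  exact (((hD₁.const_smul s).norm.tendsto H).comp hφ).add
    (((hθ.mul_const _).mul_const _).mul_const _)

lemma map_inv_two_smul_of_tendsto_dilateFst {f H : X → X → X → Y}
    (hH : Tendsto (dilateFst f) atTop (𝓝 H)) (x z a : X) :
    H ((2 : ℂ)⁻¹ • x) z a = (2 : ℂ)⁻¹ • H x z a := by
  have hshift : ∀ n,
      dilateFst f n ((2 : ℂ)⁻¹ • x) z a = (2 : ℂ)⁻¹ • dilateFst f (n + 1) x z a := by
    intro n
    have harg : ((2 : ℂ) ^ n)⁻¹ • (2 : ℂ)⁻¹ • x = ((2 : ℂ) ^ (n + 1))⁻¹ • x := by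
      rw [smul_smul, ← mul_inv, ← pow_succ]
    simp only [dilateFst]
    rw [harg, pow_succ]
    module
  refine tendsto_nhds_unique (tendsto_apply₃ hH _ z a) ?_
  simp only [hshift]
  exact ((tendsto_apply₃ hH x z a).comp (tendsto_add_atTop_nat 1)).const_smul _

theorem exists_tendsto_dilateFst [CompleteSpace Y] {s : ℂ} {r θ : ℝ} {f : X → X → X → Y}
    (hineq : FunctionalIneq s r θ f) (hf : AxisVanishing f) (hr : 1 < r) :
    ∃ H, Tendsto (dilateFst f) atTop (𝓝 H) ∧ ∀ x z a : X, ‖f x z a - H x z a‖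
      ≤ (2 : ℝ) ^ r * θ / (2 * ((2 : ℝ) ^ r - 2)) * (‖x‖ ^ r * ‖z‖ ^ r * ‖a‖ ^ r) := by
  have hlim := fun x z a => exists_tendsto_two_pow_smul_of_norm_sub_le (f · z a)
    (c := θ / 2 * (‖z‖ ^ r * ‖a‖ ^ r)) hr (fun x => by
      have := hineq.norm_two_smul_inv_two_smul_sub_le hf (by linarith) x z a
      linarith) x
  choose H hH hb using hlim
  exact ⟨H, tendsto_pi_nhds.2 fun x => tendsto_pi_nhds.2 fun z => tendsto_pi_nhds.2 (hH x z),
    fun x z a => (hb x z a).trans_eq (by rw [mul_comm 2, ← div_div]; ring)⟩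

lemma CTrilinear.of_functionalIneq_zero {s : ℂ} {r : ℝ} {f : X → X → X → Y} (hs : ‖s‖ < 1)
    (hf : AxisVanishing f) (hhalf : ∀ x z a, f ((2 : ℂ)⁻¹ • x) z a = (2 : ℂ)⁻¹ • f x z a)
    (hineq : FunctionalIneq s r 0 f) : CTrilinear f := by
  have hineq' : ∀ l m e : ℂ, ‖l‖ = 1 → ‖m‖ = 1 → ‖e‖ = 1 → ∀ x y z w a b,
      ‖D₂rot f l m e x y z w a b‖ ≤ ‖s‖ * ‖D₁ f x y z w a b‖ :=
    fun l m e hl hm he x y z w a b => by simpa [norm_smul] using hineq l m e hl hm he x y z w a b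
  have hD₁ : ∀ x y z w a b, D₁ f x y z w a b = 0 := by
    intro x y z w a b
    have hrot : D₂rot f 1 1 1 x y z w a b = D₁ f x y z w a b := by
      simp only [D₂rot, D₁, one_smul, one_mul, hhalf]
      module
    have h := hineq' 1 1 1 (by simp) (by simp) (by simp) x y z w a b
    rw [hrot] at h
    exact norm_le_zero_iff.1 (by nlinarith [norm_nonneg (D₁ f x y z w a b)])
  refine CTrilinear.of_map_unit_smul (TriAdditive.of_D₁_eq_zero hf hD₁)
    fun l m e hl hm he x z a => ?_
  have h := hineq' l m e hl hm he x 0 z 0 a 0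
  rw [hD₁, norm_zero, mul_zero, norm_le_zero_iff, hf.D₂rot_eq, hhalf, smul_smul,
    mul_inv_cancel₀ two_ne_zero, one_smul, smul_eq_zero] at h
  exact sub_eq_zero.1 (h.resolve_left two_ne_zero)

theorem exists_CTrilinear_of_functionalIneq [CompleteSpace Y] {s : ℂ} {r θ : ℝ}
    {f : X → X → X → Y} (hs : ‖s‖ < 1) (hr : 1 < r) (hf : AxisVanishing f)
    (hineq : FunctionalIneq s r θ f) :
    ∃ H, CTrilinear H ∧ ∀ x z a : X, ‖f x z a - H x z a‖
      ≤ (2 : ℝ) ^ r * θ / (2 * ((2 : ℝ) ^ r - 2)) * (‖x‖ ^ r * ‖z‖ ^ r * ‖a‖ ^ r) := by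
  obtain ⟨H, hH, hb⟩ := exists_tendsto_dilateFst hineq hf hr
  have hρ : 2 / (2 : ℝ) ^ r < 1 := by
    simpa using two_pow_div_two_rpow_pow_lt_one (r := r) (j := 1) (k := 1) (by simpa)
  have hθ : Tendsto (fun n : ℕ => θ * (2 / (2 : ℝ) ^ r) ^ n) atTop (𝓝 0) := by
    simpa using (tendsto_pow_atTop_nhds_zero_of_lt_one (by positivity) hρ).const_mul θ
  refine ⟨H, CTrilinear.of_functionalIneq_zero (r := r) hs (AxisVanishing.of_tendsto hH
    hf.dilateFst) (map_inv_two_smul_of_tendsto_dilateFst hH) ?_, hb⟩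
  exact FunctionalIneq.of_tendsto hH hθ hineq.dilateFst

noncomputable def dilate (f : X → X → X → Y) (n : ℕ) (x z a : X) : Y :=
  ((2 : ℂ) ^ n) ^ 3 • f (((2 : ℂ) ^ n)⁻¹ • x) (((2 : ℂ) ^ n)⁻¹ • z) (((2 : ℂ) ^ n)⁻¹ • a)

lemma CTrilinear.dilate_eq {H : X → X → X → Y} (hH : CTrilinear H) (n : ℕ) :
    dilate H n = H := by
  funext x z a
  have h2 : (2 : ℂ) ^ n ≠ 0 := pow_ne_zero _ two_ne_zero
  simp only [dilate, hH.2.1, hH.2.2.1, hH.2.2.2, smul_smul]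
  field_simp
  rw [one_smul]

lemma norm_dilate_sub_dilate (f g : X → X → X → Y) (n : ℕ) (x z a x' z' a' : X) :
    ‖dilate f n x z a - dilate g n x' z' a'‖
      = 8 ^ n * ‖f (((2 : ℂ) ^ n)⁻¹ • x) (((2 : ℂ) ^ n)⁻¹ • z) (((2 : ℂ) ^ n)⁻¹ • a)
          - g (((2 : ℂ) ^ n)⁻¹ • x') (((2 : ℂ) ^ n)⁻¹ • z') (((2 : ℂ) ^ n)⁻¹ • a')‖ := by
  have h8 : ‖((2 : ℂ) ^ n) ^ 3‖ = 8 ^ n := by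
    rw [norm_pow, norm_pow, Complex.norm_ofNat, ← pow_mul, mul_comm, pow_mul]
    norm_num
  rw [dilate, dilate, ← smul_sub, norm_smul, h8]

lemma eight_div_two_rpow_pow_three_lt_one {r : ℝ} (hr : 1 < r) : 8 / ((2 : ℝ) ^ r) ^ 3 < 1 := by
  have := two_pow_div_two_rpow_pow_lt_one (r := r) (j := 3) (k := 3) (by push_cast; linarith)
  norm_num at this
  exact this

lemma tendsto_dilate_of_norm_sub_le {f H : X → X → X → Y} {r C : ℝ} (hH : CTrilinear H)
    (hr : 1 < r) (hb : ∀ x z a, ‖f x z a - H x z a‖ ≤ C * (‖x‖ ^ r * ‖z‖ ^ r * ‖a‖ ^ r))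
    (x z a : X) : Tendsto (fun n => dilate f n x z a) atTop (𝓝 (H x z a)) := by
  have hle : ∀ n, ‖dilate f n x z a - dilate H n x z a‖
      ≤ C * (‖x‖ ^ r * ‖z‖ ^ r * ‖a‖ ^ r) * (8 / ((2 : ℝ) ^ r) ^ 3) ^ n := by
    intro n
    have h := hb (((2 : ℂ) ^ n)⁻¹ • x) (((2 : ℂ) ^ n)⁻¹ • z) (((2 : ℂ) ^ n)⁻¹ • a)
    simp only [norm_inv_two_pow_smul_rpow] at h
    rw [norm_dilate_sub_dilate]
    calc 8 ^ n * ‖_‖ ≤ 8 ^ n * _ := mul_le_mul_of_nonneg_left h (by positivity)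
      _ = _ := by rw [div_pow, ← pow_mul]; field_simp; ring
  have h0 : Tendsto (fun n => dilate f n x z a - dilate H n x z a) atTop (𝓝 0) :=
    squeeze_zero_norm hle (by simpa using (tendsto_pow_atTop_nhds_zero_of_lt_one (by positivity)
      (eight_div_two_rpow_pow_three_lt_one hr)).const_mul _)
  simpa [hH.dilate_eq] using h0.add_const (H x z a)

lemma CTrilinear.eq_of_norm_sub_le {f H₁ H₂ : X → X → X → Y} {r C : ℝ} (hr : 1 < r)
    (hH₁ : CTrilinear H₁) (hH₂ : CTrilinear H₂)
    (hb₁ : ∀ x z a, ‖f x z a - H₁ x z a‖ ≤ C * (‖x‖ ^ r * ‖z‖ ^ r * ‖a‖ ^ r))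
    (hb₂ : ∀ x z a, ‖f x z a - H₂ x z a‖ ≤ C * (‖x‖ ^ r * ‖z‖ ^ r * ‖a‖ ^ r)) : H₁ = H₂ :=
  funext₃ fun x z a => tendsto_nhds_unique (tendsto_dilate_of_norm_sub_le hH₁ hr hb₁ x z a)
    (tendsto_dilate_of_norm_sub_le hH₂ hr hb₂ x z a)

end Normed

section Homomorphism

variable {A B : Type*} [NormedRing A] [NormedAlgebra ℂ A] [NormedRing B] [NormedAlgebra ℂ B]

lemma dilate_two_mul_sub_mul (f : A → A → A → B) (n : ℕ) (x y z w a b : A) :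
    dilate f (2 * n) (x * y) (z * w) (a * b) - dilate f n x z a * dilate f n y w b
      = (((2 : ℂ) ^ n) ^ 3) ^ 2 •
        (f ((((2 : ℂ) ^ n)⁻¹ • x) * (((2 : ℂ) ^ n)⁻¹ • y))
            ((((2 : ℂ) ^ n)⁻¹ • z) * (((2 : ℂ) ^ n)⁻¹ • w))
            ((((2 : ℂ) ^ n)⁻¹ • a) * (((2 : ℂ) ^ n)⁻¹ • b))
          - f (((2 : ℂ) ^ n)⁻¹ • x) (((2 : ℂ) ^ n)⁻¹ • z) (((2 : ℂ) ^ n)⁻¹ • a)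
            * f (((2 : ℂ) ^ n)⁻¹ • y) (((2 : ℂ) ^ n)⁻¹ • w) (((2 : ℂ) ^ n)⁻¹ • b)) := by
  simp only [dilate, smul_mul_smul_comm, ← mul_inv, ← pow_add, ← two_mul, smul_sub]
  congr 1 <;> congr 1 <;> ring

lemma CTrilinear.map_mul_of_norm_sub_le {f H : A → A → A → B} {r θ C : ℝ} (hH : CTrilinear H)
    (hr : 2 < r) (hb : ∀ x z a, ‖f x z a - H x z a‖ ≤ C * (‖x‖ ^ r * ‖z‖ ^ r * ‖a‖ ^ r))
    (hm : ∀ x y z w a b : A, ‖f (x * y) (z * w) (a * b) - f x z a * f y w b‖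
        ≤ θ * (‖x‖ ^ r + ‖y‖ ^ r) * (‖z‖ ^ r + ‖w‖ ^ r) * (‖a‖ ^ r + ‖b‖ ^ r))
    (x y z w a b : A) : H (x * y) (z * w) (a * b) = H x z a * H y w b := by
  have hr1 : 1 < r := by linarith
  have hρ : 64 / ((2 : ℝ) ^ r) ^ 3 < 1 := by
    have := two_pow_div_two_rpow_pow_lt_one (r := r) (j := 6) (k := 3) (by push_cast; linarith)
    norm_num at this
    exact this
  have h2n : Tendsto (fun n : ℕ => 2 * n) atTop atTop :=
    tendsto_atTop_mono (fun n => Nat.le_mul_of_pos_left n two_pos) tendsto_id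
  refine eq_of_tendsto_of_norm_sub_le_geometric
    ((tendsto_dilate_of_norm_sub_le hH hr1 hb _ _ _).comp h2n)
    ((tendsto_dilate_of_norm_sub_le hH hr1 hb x z a).mul
      (tendsto_dilate_of_norm_sub_le hH hr1 hb y w b)) (by positivity) hρ
    (K := θ * (‖x‖ ^ r + ‖y‖ ^ r) * (‖z‖ ^ r + ‖w‖ ^ r) * (‖a‖ ^ r + ‖b‖ ^ r)) fun n => ?_
  have h64 : ‖(((2 : ℂ) ^ n) ^ 3) ^ 2‖ = 64 ^ n := by
    rw [norm_pow, norm_pow, norm_pow, Complex.norm_ofNat, ← pow_mul, ← pow_mul, mul_comm,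
      pow_mul]
    norm_num
  have h := hm (((2 : ℂ) ^ n)⁻¹ • x) (((2 : ℂ) ^ n)⁻¹ • y) (((2 : ℂ) ^ n)⁻¹ • z)
    (((2 : ℂ) ^ n)⁻¹ • w) (((2 : ℂ) ^ n)⁻¹ • a) (((2 : ℂ) ^ n)⁻¹ • b)
  simp only [norm_inv_two_pow_smul_rpow] at h
  rw [Function.comp_apply, dilate_two_mul_sub_mul, norm_smul, h64]
  calc 64 ^ n * ‖_‖ ≤ 64 ^ n * _ := mul_le_mul_of_nonneg_left h (by positivity)
    _ = _ := by rw [div_pow, ← pow_mul]; field_simp; ring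

lemma CTrilinear.map_perm_of_norm_sub_le {f H : A → A → A → B} {r θ C : ℝ} (hH : CTrilinear H)
    (hr : 1 < r) (hb : ∀ x z a, ‖f x z a - H x z a‖ ≤ C * (‖x‖ ^ r * ‖z‖ ^ r * ‖a‖ ^ r))
    (hp : ∀ (σ : Equiv.Perm (Fin 3)) (x : Fin 3 → A), ‖f (x (σ 0)) (x (σ 1)) (x (σ 2))
      - f (x 0) (x 1) (x 2)‖ ≤ θ * ‖x 0‖ ^ r * ‖x 1‖ ^ r * ‖x 2‖ ^ r)
    (σ : Equiv.Perm (Fin 3)) (x : Fin 3 → A) :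
    H (x (σ 0)) (x (σ 1)) (x (σ 2)) = H (x 0) (x 1) (x 2) := by
  refine eq_of_tendsto_of_norm_sub_le_geometric (tendsto_dilate_of_norm_sub_le hH hr hb _ _ _)
    (tendsto_dilate_of_norm_sub_le hH hr hb _ _ _) (by positivity)
    (eight_div_two_rpow_pow_three_lt_one hr) (K := θ * ‖x 0‖ ^ r * ‖x 1‖ ^ r * ‖x 2‖ ^ r)
    fun n => ?_
  have h := hp σ (((2 : ℂ) ^ n)⁻¹ • x)
  simp only [Pi.smul_apply, norm_inv_two_pow_smul_rpow] at h
  rw [norm_dilate_sub_dilate]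
  calc 8 ^ n * ‖_‖ ≤ 8 ^ n * _ := mul_le_mul_of_nonneg_left h (by positivity)
    _ = _ := by rw [div_pow, ← pow_mul]; field_simp; ring

end Homomorphism

variable {A B : Type*} [NormedRing A] [NormedAlgebra ℂ A] [CompleteSpace A]
  [NormedRing B] [NormedAlgebra ℂ B] [CompleteSpace B]

theorem stmt_17_general (s : ℂ) (hs1 : ‖s‖ < 1) (r θ : ℝ) (hr : 2 < r)
    (f : A → A → A → B)
    (hzero : ∀ x z a : A, f x 0 a = 0 ∧ f 0 z a = 0 ∧ f x z 0 = 0)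
    (hineq : ∀ l m e : ℂ, ‖l‖ = 1 → ‖m‖ = 1 → ‖e‖ = 1 → ∀ x y z w a b : A,
      ‖(2 : ℂ) • f ((2 : ℂ)⁻¹ • (l • (x + y))) (m • (z - w)) (e • (a + b))
          + (2 : ℂ) • f ((2 : ℂ)⁻¹ • (l • (x - y))) (m • (z + w)) (e • (a - b))
          - (l * m * e) • ((2 : ℂ) • f x z a - (2 : ℂ) • f x w b
              + (2 : ℂ) • f y z b - (2 : ℂ) • f y w a)‖
        ≤ ‖s • D₁ f x y z w a b‖ + θ * (‖x‖ ^ r + ‖y‖ ^ r) * (‖z‖ ^ r + ‖w‖ ^ r) * (‖a‖ ^ r + ‖b‖ ^ r)) :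
    (∃! H : A → A → A → B, CTrilinear H ∧
      ∀ x z a : A, ‖f x z a - H x z a‖ ≤ (2 : ℝ) ^ r * θ / (2 * ((2 : ℝ) ^ r - 2)) * (‖x‖ ^ r * ‖z‖ ^ r * ‖a‖ ^ r)) ∧
    ((∀ (σ : Equiv.Perm (Fin 3)) (x : Fin 3 → A),
      ‖f (x (σ 0)) (x (σ 1)) (x (σ 2)) - f (x 0) (x 1) (x 2)‖
        ≤ θ * ‖x 0‖ ^ r * ‖x 1‖ ^ r * ‖x 2‖ ^ r) →
     (∀ x y z w a b : A,
      ‖f (x * y) (z * w) (a * b) - f x z a * f y w b‖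
        ≤ θ * (‖x‖ ^ r + ‖y‖ ^ r) * (‖z‖ ^ r + ‖w‖ ^ r) * (‖a‖ ^ r + ‖b‖ ^ r)) →
     ∀ H : A → A → A → B,
       (CTrilinear H ∧ ∀ x z a : A, ‖f x z a - H x z a‖ ≤ (2 : ℝ) ^ r * θ / (2 * ((2 : ℝ) ^ r - 2)) * (‖x‖ ^ r * ‖z‖ ^ r * ‖a‖ ^ r)) →
       PermutingTrihomomorphism H) := by
  have hr1 : 1 < r := by linarith
  obtain ⟨H, hH, hb⟩ := exists_CTrilinear_of_functionalIneq hs1 hr1 hzero hineq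
  refine ⟨⟨H, ⟨hH, hb⟩, fun H' hH' => CTrilinear.eq_of_norm_sub_le hr1 hH'.1 hH hH'.2 hb⟩, ?_⟩
  rintro hperm hmul H' ⟨hH', hb'⟩
  exact ⟨hH', hH'.map_mul_of_norm_sub_le hr hb' hmul, hH'.map_perm_of_norm_sub_le hr1 hb' hperm⟩

theorem stmt_17 (s : ℂ) (hs0 : s ≠ 0) (hs1 : ‖s‖ < 1) (r θ : ℝ) (hr : 2 < r) (hθ : 0 ≤ θ)
    (f : A → A → A → B)
    (hzero : ∀ x z a : A, f x 0 a = 0 ∧ f 0 z a = 0 ∧ f x z 0 = 0)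
    (hineq : ∀ l m e : ℂ, ‖l‖ = 1 → ‖m‖ = 1 → ‖e‖ = 1 → ∀ x y z w a b : A,
      ‖(2 : ℂ) • f ((2 : ℂ)⁻¹ • (l • (x + y))) (m • (z - w)) (e • (a + b))
          + (2 : ℂ) • f ((2 : ℂ)⁻¹ • (l • (x - y))) (m • (z + w)) (e • (a - b))
          - (l * m * e) • ((2 : ℂ) • f x z a - (2 : ℂ) • f x w b
              + (2 : ℂ) • f y z b - (2 : ℂ) • f y w a)‖
        ≤ ‖s • D₁ f x y z w a b‖ + θ * (‖x‖ ^ r + ‖y‖ ^ r) * (‖z‖ ^ r + ‖w‖ ^ r) * (‖a‖ ^ r + ‖b‖ ^ r)) :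
    (∃! H : A → A → A → B, CTrilinear H ∧
      ∀ x z a : A, ‖f x z a - H x z a‖ ≤ (2 : ℝ) ^ r * θ / (2 * ((2 : ℝ) ^ r - 2)) * (‖x‖ ^ r * ‖z‖ ^ r * ‖a‖ ^ r)) ∧
    ((∀ (σ : Equiv.Perm (Fin 3)) (x : Fin 3 → A),
      ‖f (x (σ 0)) (x (σ 1)) (x (σ 2)) - f (x 0) (x 1) (x 2)‖
        ≤ θ * ‖x 0‖ ^ r * ‖x 1‖ ^ r * ‖x 2‖ ^ r) →
     (∀ x y z w a b : A,
      ‖f (x * y) (z * w) (a * b) - f x z a * f y w b‖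
        ≤ θ * (‖x‖ ^ r + ‖y‖ ^ r) * (‖z‖ ^ r + ‖w‖ ^ r) * (‖a‖ ^ r + ‖b‖ ^ r)) →
     ∀ H : A → A → A → B,
       (CTrilinear H ∧ ∀ x z a : A, ‖f x z a - H x z a‖ ≤ (2 : ℝ) ^ r * θ / (2 * ((2 : ℝ) ^ r - 2)) * (‖x‖ ^ r * ‖z‖ ^ r * ‖a‖ ^ r)) →
       PermutingTrihomomorphism H) :=
  stmt_17_general s hs1 r θ hr f hzero hineq
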